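/- arXiv:1406.0374 — 2 statements merged into one kernel-verified Lean document; each statement's English description precedes it below -/
import Mathlib

section
/- For all x ∈ Λ and all configurations ξ : Λ → ℤ≥0, the detailed balance identity e^{U(x,ξ)} · e^{W(ξ)} = e^{W(ξ + e^{(x)})} holds, where e^{(x)} is the configuration equal to 1 at x and 0 elsewhere. -/
open Finset

/-- detailed balance identity e^{U(x,ξ)} e^{W(ξ)} = e^{W(ξ + e^{(x)})},
where the sum over unordered adjacent pairs {x,y} is written as half the sum over
ordered adjacent pairs. -/
theorem detailed_balance {V : Type*} [Fintype V] [DecidableEq V]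
    (G : SimpleGraph V) [DecidableRel G.Adj] (α β : ℝ)
    (U : (V → ℕ) → V → ℝ) (W : (V → ℕ) → ℝ)
    (hU : ∀ ξ x, U ξ x = α * (ξ x : ℝ) + β * ∑ y ∈ G.neighborFinset x, (ξ y : ℝ))
    (hW : ∀ ξ, W ξ = α * ∑ x : V, (ξ x : ℝ) * ((ξ x : ℝ) - 1) / 2
        + β * (∑ x : V, ∑ y ∈ G.neighborFinset x, (ξ x : ℝ) * (ξ y : ℝ)) / 2)
    (ξ : V → ℕ) (x : V) :
    Real.exp (U ξ x) * Real.exp (W ξ)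
      = Real.exp (W (fun y => ξ y + if y = x then 1 else 0)) := by
  rw [← Real.exp_add]
  congr 1
  rw [hU, hW, hW]

  have hcast : ∀ v : V, (((ξ v + if v = x then 1 else 0 : ℕ)) : ℝ)
      = (ξ v : ℝ) + (if v = x then (1 : ℝ) else 0) := by
    intro v; split <;> simp
  simp only [hcast]
  set S := ∑ y ∈ G.neighborFinset x, (ξ y : ℝ) with hS
  have h1 : ∑ v : V, ((ξ v : ℝ) + (if v = x then (1:ℝ) else 0))
        * ((ξ v : ℝ) + (if v = x then (1:ℝ) else 0) - 1) / 2
      = (∑ v : V, (ξ v : ℝ) * ((ξ v : ℝ) - 1) / 2) + (ξ x : ℝ) := by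
    have hterm : ∀ v : V, ((ξ v : ℝ) + (if v = x then (1:ℝ) else 0))
          * ((ξ v : ℝ) + (if v = x then (1:ℝ) else 0) - 1) / 2
        = (ξ v : ℝ) * ((ξ v : ℝ) - 1) / 2 + (if v = x then (ξ v : ℝ) else 0) := by
      intro v; split <;> ring
    rw [Finset.sum_congr rfl (fun v _ => hterm v), Finset.sum_add_distrib,
      Finset.sum_ite_eq' Finset.univ x (fun v => (ξ v : ℝ))]
    simp
  have h2 : ∑ v : V, ∑ y ∈ G.neighborFinset v,
        ((ξ v : ℝ) + (if v = x then (1:ℝ) else 0))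
        * ((ξ y : ℝ) + (if y = x then (1:ℝ) else 0))
      = (∑ v : V, ∑ y ∈ G.neighborFinset v, (ξ v : ℝ) * (ξ y : ℝ)) + 2 * S := by
    have hterm : ∀ v : V, ∀ y ∈ G.neighborFinset v,
        ((ξ v : ℝ) + (if v = x then (1:ℝ) else 0))
          * ((ξ y : ℝ) + (if y = x then (1:ℝ) else 0))
        = (ξ v : ℝ) * (ξ y : ℝ) + (if v = x then (ξ y : ℝ) else 0)
          + (if y = x then (ξ v : ℝ) else 0) := by
      intro v y hy
      have hne : y ≠ v := by
        rw [SimpleGraph.mem_neighborFinset] at hy; exact hy.ne'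
      by_cases hv : v = x <;> by_cases hyx : y = x <;>
        simp [hv, hyx] at * <;> ring
    have hmid : ∀ v : V, ∑ y ∈ G.neighborFinset v, (if v = x then (ξ y : ℝ) else 0)
        = if v = x then S else 0 := by
      intro v
      by_cases hv : v = x
      · subst hv; simp [hS]
      · simp [hv]
    have hinner : ∀ v : V, ∑ y ∈ G.neighborFinset v,
        ((ξ v : ℝ) + (if v = x then (1:ℝ) else 0))
          * ((ξ y : ℝ) + (if y = x then (1:ℝ) else 0))
        = (∑ y ∈ G.neighborFinset v, (ξ v : ℝ) * (ξ y : ℝ))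
          + (if v = x then S else 0)
          + (if x ∈ G.neighborFinset v then (ξ v : ℝ) else 0) := by
      intro v
      rw [Finset.sum_congr rfl (hterm v), Finset.sum_add_distrib, Finset.sum_add_distrib,
        Finset.sum_ite_eq' (G.neighborFinset v) x (fun _ => (ξ v : ℝ)), hmid]
    rw [Finset.sum_congr rfl (fun v _ => hinner v), Finset.sum_add_distrib,
      Finset.sum_add_distrib, Finset.sum_ite_eq' Finset.univ x (fun _ => S)]
    have h3 : ∑ v : V, (if x ∈ G.neighborFinset v then (ξ v : ℝ) else 0)
        = ∑ v : V, (if v ∈ G.neighborFinset x then (ξ v : ℝ) else 0) := by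
      refine Finset.sum_congr rfl fun v _ => if_congr ?_ rfl rfl
      simp [SimpleGraph.mem_neighborFinset, G.adj_comm]
    rw [h3, Finset.sum_ite_mem, Finset.univ_inter]
    simp [hS]; ring
  rw [h1, h2]
  ring
end

section
/- For the star graph matrix A_Q with α < 0 < β and α + β√n < 0, A_Q is positive definite; consequently ∑_{ξ ∈ ℤ≥0^{n+1}} exp(−Q(ξ)/2) < ∞ where Q(ξ) = ⟨A_Q ξ, ξ⟩. -/
open Finset

private lemma summable_pi_geom (r : ℝ) (hr0 : 0 ≤ r) (hr1 : r < 1) :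
    ∀ m : ℕ, Summable (fun ξ : Fin m → ℕ => ∏ i, r ^ ξ i) := by
  intro m
  induction m with
  | zero => exact summable_of_finite_support (Set.toFinite _)
  | succ m ih =>
    have hg : Summable (fun k : ℕ => r ^ k) := summable_geometric_of_lt_one hr0 hr1
    have key : Summable (fun p : ℕ × (Fin m → ℕ) => r ^ p.1 * ∏ i, r ^ p.2 i) := by
      apply Summable.mul_of_nonneg hg ih
      · intro x; positivity
      · intro x; exact Finset.prod_nonneg fun _ _ => pow_nonneg hr0 _
    have := key.comp_injective (i := fun ξ : Fin (m+1) → ℕ => (ξ 0, fun i : Fin m => ξ i.succ))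
      (fun ξ η h => by
        simp only [Prod.mk.injEq] at h
        funext i
        refine Fin.cases h.1 (fun j => congrFun h.2 j) i)
    convert this using 2 with ξ
    · rfl
    simp [Fin.prod_univ_succ]

private lemma star_quad_lower (n : ℕ) (hn : 1 ≤ n) (α β : ℝ)
    (hβ : 0 < β)
    (A : Matrix (Fin (n + 1)) (Fin (n + 1)) ℝ)
    (hA : ∀ i j, A i j = if i = j then -α
        else if i = Fin.last n ∨ j = Fin.last n then -β else 0) :
    ∀ x : Fin (n+1) → ℝ,
      (-α - β * Real.sqrt n) * ∑ i, x i ^ 2 ≤ dotProduct x (A.mulVec x) := by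
  intro x
  have hs0 : 0 < Real.sqrt n := Real.sqrt_pos.mpr (by exact_mod_cast Nat.pos_of_ne_zero (by omega))
  have hs2 : Real.sqrt n ^ 2 = n := Real.sq_sqrt (Nat.cast_nonneg n)
  have hrow1 : ∀ i : Fin n, A.mulVec x i.castSucc = -α * x i.castSucc + -β * x (Fin.last n) := by
    intro i
    unfold Matrix.mulVec dotProduct
    rw [Fin.sum_univ_castSucc]
    have h1 : ∀ j : Fin n, A i.castSucc j.castSucc * x j.castSucc
        = if i = j then -α * x j.castSucc else 0 := by
      intro j
      rw [hA]
      simp [Fin.castSucc_inj, (Fin.castSucc_lt_last _).ne, ite_mul]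
    rw [Finset.sum_congr rfl fun j _ => h1 j, Finset.sum_ite_eq]
    have h2 : A i.castSucc (Fin.last n) = -β := by
      rw [hA]; simp [(Fin.castSucc_lt_last _).ne]
    simp [h2]
  have hrow2 : A.mulVec x (Fin.last n)
      = -α * x (Fin.last n) + -β * ∑ i : Fin n, x i.castSucc := by
    unfold Matrix.mulVec dotProduct
    rw [Fin.sum_univ_castSucc]
    have h1 : ∀ j : Fin n, A (Fin.last n) j.castSucc * x j.castSucc
        = -β * x j.castSucc := by
      intro j
      rw [hA]; simp [(Fin.castSucc_lt_last j).ne']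
    rw [Finset.sum_congr rfl fun j _ => h1 j]
    simp [hA, Finset.mul_sum]
    ring
  have hQ : dotProduct x (A.mulVec x)
      = -α * (∑ i : Fin n, x i.castSucc ^ 2)
        - 2 * β * x (Fin.last n) * (∑ i : Fin n, x i.castSucc)
        - α * x (Fin.last n) ^ 2 := by
    unfold dotProduct
    rw [Fin.sum_univ_castSucc]
    rw [Finset.sum_congr rfl fun j _ => by rw [hrow1 j], hrow2]
    have e1 : ∑ j : Fin n, x j.castSucc * (-α * x j.castSucc + -β * x (Fin.last n))
        = -α * (∑ i : Fin n, x i.castSucc ^ 2)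
          - β * x (Fin.last n) * (∑ i : Fin n, x i.castSucc) := by
      rw [Finset.mul_sum, Finset.mul_sum, ← Finset.sum_sub_distrib]
      exact Finset.sum_congr rfl fun j _ => by ring
    rw [e1]
    ring
  rw [hQ, Fin.sum_univ_castSucc]
  set s := Real.sqrt n
  set u := x (Fin.last n)
  set S := ∑ i : Fin n, x i.castSucc
  set T := ∑ i : Fin n, x i.castSucc ^ 2
  have hT0 : 0 ≤ T := Finset.sum_nonneg fun i _ => sq_nonneg _
  have hCS : S ^ 2 ≤ n * T := by
    simpa using sq_sum_le_card_mul_sum_sq (s := Finset.univ) (f := fun i : Fin n => x i.castSucc)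
  rw [← hs2] at hCS
  nlinarith [sq_nonneg (s * u - S), sq_nonneg (s * u + S), mul_pos hβ hs0,
    mul_nonneg (mul_pos hβ hs0).le hT0, sq_nonneg u]

/-- for the star-graph matrix A_Q with α < 0 < β and α + β√n < 0,
A_Q is positive definite and ∑_{ξ ∈ ℤ≥0^{n+1}} exp(−⟨A_Q ξ, ξ⟩/2) < ∞. -/
theorem star_posDef_summable (n : ℕ) (hn : 1 ≤ n) (α β : ℝ)
    (hα : α < 0) (hβ : 0 < β) (hcrit : α + β * Real.sqrt n < 0)
    (A : Matrix (Fin (n + 1)) (Fin (n + 1)) ℝ)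
    (hA : ∀ i j, A i j = if i = j then -α
        else if i = Fin.last n ∨ j = Fin.last n then -β else 0) :
    A.PosDef ∧
    Summable (fun ξ : Fin (n + 1) → ℕ =>
      Real.exp (-(dotProduct (A.mulVec fun i => (ξ i : ℝ)) (fun i => (ξ i : ℝ))) / 2)) := by
  have key := star_quad_lower n hn α β hβ A hA
  have hc : 0 < -α - β * Real.sqrt n := by linarith
  constructor
  · rw [Matrix.posDef_iff_dotProduct_mulVec]
    constructor
    · ext i j
      rw [Matrix.conjTranspose_apply, star_trivial, hA, hA]
      by_cases h : i = j
      · simp [h]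
      · simp [h, Ne.symm h, or_comm]
    · intro x hx
      have h1 : 0 < ∑ i, x i ^ 2 := by
        obtain ⟨i, hi⟩ := Function.ne_iff.mp hx
        exact Finset.sum_pos' (fun j _ => sq_nonneg _)
          ⟨i, Finset.mem_univ i, sq_pos_of_ne_zero hi⟩
      have := key x
      have h2 : 0 < dotProduct x (A.mulVec x) := lt_of_lt_of_le (mul_pos hc h1) this
      simpa [dotProduct_comm] using h2
  · set c := -α - β * Real.sqrt n with hcdef
    set r := Real.exp (-c / 2) with hr
    have hr0 : 0 ≤ r := Real.exp_nonneg _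
    have hr1 : r < 1 := Real.exp_lt_one_iff.mpr (by linarith)
    refine Summable.of_nonneg_of_le (f := fun ξ : Fin (n+1) → ℕ => ∏ i, r ^ ξ i)
      (fun ξ => Real.exp_nonneg _) ?_ (summable_pi_geom r hr0 hr1 (n+1))
    intro ξ
    have hb : c * ∑ i, (ξ i : ℝ) ≤ dotProduct (A.mulVec fun i => (ξ i : ℝ)) fun i => (ξ i : ℝ) := by
      have h1 := key (fun i => (ξ i : ℝ))
      have h2 : ∑ i, (ξ i : ℝ) ≤ ∑ i, (ξ i : ℝ) ^ 2 := by
        apply Finset.sum_le_sum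
        intro i _
        have h3 : (ξ i : ℝ) ≤ (ξ i : ℝ) * (ξ i : ℝ) := by
          rcases Nat.eq_zero_or_pos (ξ i) with h | h
          · simp [h]
          · nlinarith [(by exact_mod_cast h : (1:ℝ) ≤ (ξ i : ℝ))]
        nlinarith
      calc c * ∑ i, (ξ i : ℝ) ≤ c * ∑ i, (ξ i : ℝ) ^ 2 :=
            mul_le_mul_of_nonneg_left h2 hc.le
        _ ≤ _ := by rw [dotProduct_comm] at h1; exact h1
    have hprod : ∏ i, r ^ ξ i = Real.exp (∑ i, (ξ i : ℝ) * (-c/2)) := by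
      rw [Real.exp_sum]
      exact Finset.prod_congr rfl fun i _ => (Real.exp_nat_mul _ _).symm
    have hsum : ∑ i, (ξ i : ℝ) * (-c/2) = -(c * ∑ i, (ξ i : ℝ)) / 2 := by
      rw [← Finset.sum_mul]
      ring
    show _ ≤ ∏ i, r ^ ξ i
    rw [hprod, hsum]
    apply Real.exp_le_exp.mpr
    rw [div_le_div_iff_of_pos_right (by norm_num : (0:ℝ) < 2)]
    exact neg_le_neg hb
end
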